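/- arXiv:2412.06572 — 3 statements merged into one kernel-verified Lean document; each statement's English description precedes it below -/
import Mathlib

section
/- For every κ = (ξ,η) ∈ ℍ², the bracket {κ,κ} = ξ*η − η*ξ is a real multiple of k; moreover {κ,κ} = 0 if and only if κ = (0,0) or κ is a quaternionic spinor. -/
open Quaternion

noncomputable section

/-- The involution `q* = a + bi + cj - dk` on quaternions (Clifford reversion). -/
def qstar (q : ℍ[ℝ]) : ℍ[ℝ] := ⟨q.re, q.imI, q.imJ, -q.imK⟩

/-- The involution `q' = a - bi - cj + dk` on quaternions. -/
def qprime (q : ℍ[ℝ]) : ℍ[ℝ] := ⟨q.re, -q.imI, -q.imJ, q.imK⟩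

/-- A paravector is an element of `ℝ + ℝi + ℝj`, i.e. a quaternion with zero `k`-component. -/
def IsParavector (q : ℍ[ℝ]) : Prop := q.imK = 0

/-- The quaternion `k`. -/
def qk : ℍ[ℝ] := ⟨0, 0, 0, 1⟩

/-- A quaternionic spinor: a pair `(ξ, η) ≠ (0,0)` with `ξ * conj η` a paravector. -/
def IsSpinor (κ : ℍ[ℝ] × ℍ[ℝ]) : Prop := κ ≠ 0 ∧ IsParavector (κ.1 * star κ.2)

/-- The bracket `{κ₁, κ₂} = ξ₁* η₂ − η₁* ξ₂`. -/
def bracket (κ₁ κ₂ : ℍ[ℝ] × ℍ[ℝ]) : ℍ[ℝ] := qstar κ₁.1 * κ₂.2 - qstar κ₁.2 * κ₂.1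

/-- Right multiplication `κ x = (ξ x, η x)`. -/
def rmul (κ : ℍ[ℝ] × ℍ[ℝ]) (x : ℍ[ℝ]) : ℍ[ℝ] × ℍ[ℝ] := (κ.1 * x, κ.2 * x)

/-- The complementary pair `κ̌ = (η', −ξ')`. -/
def qcheck (κ : ℍ[ℝ] × ℍ[ℝ]) : ℍ[ℝ] × ℍ[ℝ] := (qprime κ.2, -qprime κ.1)

/-- The real inner product on `ℍ²`: `⟨κ₁, κ₂⟩ = Re (ξ₁ ξ̄₂ + η₁ η̄₂)`. -/
def qinner (κ₁ κ₂ : ℍ[ℝ] × ℍ[ℝ]) : ℝ := (κ₁.1 * star κ₂.1 + κ₁.2 * star κ₂.2).re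

/-- The squared norm `|κ|² = |ξ|² + |η|²` on `ℍ²`. -/
def qnsq (κ : ℍ[ℝ] × ℍ[ℝ]) : ℝ := Quaternion.normSq κ.1 + Quaternion.normSq κ.2
@[simp] lemma qstar_re (q : ℍ[ℝ]) : (qstar q).re = q.re := rfl
@[simp] lemma qstar_imI (q : ℍ[ℝ]) : (qstar q).imI = q.imI := rfl
@[simp] lemma qstar_imJ (q : ℍ[ℝ]) : (qstar q).imJ = q.imJ := rfl
@[simp] lemma qstar_imK (q : ℍ[ℝ]) : (qstar q).imK = -q.imK := rfl

@[simp] lemma qk_re : qk.re = 0 := rfl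
@[simp] lemma qk_imI : qk.imI = 0 := rfl
@[simp] lemma qk_imJ : qk.imJ = 0 := rfl
@[simp] lemma qk_imK : qk.imK = 1 := rfl

lemma qk_ne_zero : qk ≠ 0 := fun h => one_ne_zero (congrArg QuaternionAlgebra.imK h)

lemma bracket_self_eq_smul_qk (κ : ℍ[ℝ] × ℍ[ℝ]) :
    bracket κ κ = (-2 * (κ.1 * star κ.2).imK) • qk := by
  ext <;>
    simp only [bracket, re_sub, imI_sub, imJ_sub, imK_sub, re_mul, imI_mul, imJ_mul, imK_mul,
      re_smul, imI_smul, imJ_smul, imK_smul, re_star, imI_star, imJ_star, imK_star,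
      qstar_re, qstar_imI, qstar_imJ, qstar_imK, qk_re, qk_imI, qk_imJ, qk_imK, smul_eq_mul] <;>
    ring

lemma bracket_self_eq_zero_iff (κ : ℍ[ℝ] × ℍ[ℝ]) :
    bracket κ κ = 0 ↔ IsParavector (κ.1 * star κ.2) := by
  simp [bracket_self_eq_smul_qk, qk_ne_zero, IsParavector]

lemma eq_zero_or_isSpinor_iff (κ : ℍ[ℝ] × ℍ[ℝ]) :
    κ = 0 ∨ IsSpinor κ ↔ IsParavector (κ.1 * star κ.2) := by
  by_cases hκ : κ = 0
  · simp [hκ, IsParavector]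
  · simp [hκ, IsSpinor]

/-- For every `κ ∈ ℍ²`, the bracket `{κ,κ}` is a real multiple of `k`; moreover
`{κ,κ} = 0` iff `κ = 0` or `κ` is a quaternionic spinor. -/
theorem bracket_self (κ : ℍ[ℝ] × ℍ[ℝ]) :
    (∃ t : ℝ, bracket κ κ = t • qk) ∧
    (bracket κ κ = 0 ↔ κ = 0 ∨ IsSpinor κ) :=
  ⟨⟨_, bracket_self_eq_smul_qk κ⟩,
    (bracket_self_eq_zero_iff κ).trans (eq_zero_or_isSpinor_iff κ).symm⟩
end
end

section
/- Let κ = (ξ,η) ∈ ℍ². Then: (i) if κ is a quaternionic spinor then so is κ̌; (ii) for any x,y ∈ ℍ with x ȳ a paravector, ⟨κx, κ̌y⟩ = 0 (in particular ⟨κ, κ̌⟩ = 0); (iii) if κ is a quaternionic spinor then ⟨κx, κ̌y⟩ = 0 for all x,y ∈ ℍ; (iv) {κx, κ̌y} = −x* y |κ|² for all x,y ∈ ℍ (in particular {κ, κ̌} = −|κ|²). -/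
/-! `q ↦ q'` is conjugation by `k`, hence an algebra automorphism of `ℍ` commuting with `ξ ↦ ξ̄`
and fixing `k`-components, while `q* = (q̄)'` is an anti-automorphism. Consequently
`ξ* ξ' = (ξ̄ ξ)' = |ξ|²`, which gives (iv) after factoring `x*` and `y` out of the bracket, and the
`k`-component of `η' (−ξ')‾` equals that of `ξ η̄`, which gives (i). The inner product
`⟨κx, κ̌y⟩` is a product of the `k`-components of `x ȳ` and `ξ η̄`, which gives (ii) and (iii). -/

open Quaternion

noncomputable section

namespace Quaternion

@[simp] lemma re_qprime (q : ℍ[ℝ]) : (qprime q).re = q.re := rfl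
@[simp] lemma imI_qprime (q : ℍ[ℝ]) : (qprime q).imI = -q.imI := rfl
@[simp] lemma imJ_qprime (q : ℍ[ℝ]) : (qprime q).imJ = -q.imJ := rfl
@[simp] lemma imK_qprime (q : ℍ[ℝ]) : (qprime q).imK = q.imK := rfl

lemma qprime_mul (p q : ℍ[ℝ]) : qprime (p * q) = qprime p * qprime q := by
  ext <;> simp <;> ring

lemma qprime_star (q : ℍ[ℝ]) : qprime (star q) = star (qprime q) := by
  ext <;> simp

@[simp] lemma qprime_coe (r : ℝ) : qprime (r : ℍ[ℝ]) = r := by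
  ext <;> simp

@[simp] lemma qprime_eq_zero_iff (q : ℍ[ℝ]) : qprime q = 0 ↔ q = 0 := by
  simp [Quaternion.ext_iff]

lemma qstar_eq_qprime_star (q : ℍ[ℝ]) : qstar q = qprime (star q) := by
  ext <;> simp [qstar]

lemma qstar_mul (p q : ℍ[ℝ]) : qstar (p * q) = qstar q * qstar p := by
  simp only [qstar_eq_qprime_star, star_mul, qprime_mul]

lemma qstar_mul_qprime_self (q : ℍ[ℝ]) : qstar q * qprime q = normSq q := by
  rw [qstar_eq_qprime_star, ← qprime_mul, star_mul_self, qprime_coe]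

end Quaternion

lemma qcheck_eq_zero_iff (κ : ℍ[ℝ] × ℍ[ℝ]) : qcheck κ = 0 ↔ κ = 0 := by
  simp [qcheck, Prod.ext_iff, and_comm]

lemma imK_qcheck_fst_mul_star_snd (κ : ℍ[ℝ] × ℍ[ℝ]) :
    ((qcheck κ).1 * star (qcheck κ).2).imK = (κ.1 * star κ.2).imK := by
  calc ((qcheck κ).1 * star (qcheck κ).2).imK
      = -(qprime (κ.2 * star κ.1)).imK := by
        simp only [qcheck, star_neg, mul_neg, qprime_mul, qprime_star, imK_neg]
    _ = (κ.1 * star κ.2).imK := by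
        rw [imK_qprime, ← imK_star, star_mul, star_star]

lemma IsSpinor.qcheck {κ : ℍ[ℝ] × ℍ[ℝ]} (hκ : IsSpinor κ) : IsSpinor (qcheck κ) :=
  ⟨(qcheck_eq_zero_iff κ).not.mpr hκ.1, (imK_qcheck_fst_mul_star_snd κ).trans hκ.2⟩

lemma qinner_rmul_rmul_qcheck (κ : ℍ[ℝ] × ℍ[ℝ]) (x y : ℍ[ℝ]) :
    qinner (rmul κ x) (rmul (qcheck κ) y) = -2 * (x * star y).imK * (κ.1 * star κ.2).imK := by
  simp only [qinner, rmul, qcheck, re_add, re_mul, imI_mul, imJ_mul, imK_mul, re_star, imI_star,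
    imJ_star, imK_star, re_neg, imI_neg, imJ_neg, imK_neg, re_qprime, imI_qprime, imJ_qprime,
    imK_qprime]
  ring

lemma bracket_rmul_rmul_qcheck (κ : ℍ[ℝ] × ℍ[ℝ]) (x y : ℍ[ℝ]) :
    bracket (rmul κ x) (rmul (qcheck κ) y) = -(qstar x * y * ((qnsq κ : ℝ) : ℍ[ℝ])) := by
  calc bracket (rmul κ x) (rmul (qcheck κ) y)
      = -(qstar x * (qstar κ.1 * qprime κ.1 + qstar κ.2 * qprime κ.2) * y) := by
        simp only [bracket, rmul, qcheck, qstar_mul]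
        noncomm_ring
    _ = -(qstar x * y * ((qnsq κ : ℝ) : ℍ[ℝ])) := by
        rw [qstar_mul_qprime_self, qstar_mul_qprime_self, ← coe_add, mul_assoc, coe_commutes,
          ← mul_assoc, qnsq]

/-- Properties of the complementary pair `κ̌ = (η', −ξ')`:
(i) if `κ` is a spinor then so is `κ̌`;
(ii) if `x ȳ` is a paravector then `⟨κx, κ̌y⟩ = 0`;
(iii) if `κ` is a spinor then `⟨κx, κ̌y⟩ = 0` for all `x, y`;
(iv) `{κx, κ̌y} = −x* y |κ|²` for all `x, y`. -/
theorem complementary_spinor_facts (κ : ℍ[ℝ] × ℍ[ℝ]) :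
    (IsSpinor κ → IsSpinor (qcheck κ)) ∧
    (∀ x y : ℍ[ℝ], IsParavector (x * star y) → qinner (rmul κ x) (rmul (qcheck κ) y) = 0) ∧
    (IsSpinor κ → ∀ x y : ℍ[ℝ], qinner (rmul κ x) (rmul (qcheck κ) y) = 0) ∧
    (∀ x y : ℍ[ℝ], bracket (rmul κ x) (rmul (qcheck κ) y) = -(qstar x * y * ((qnsq κ : ℝ) : ℍ[ℝ]))) := by
  refine ⟨IsSpinor.qcheck, fun x y hxy => ?_, fun hκ x y => ?_, bracket_rmul_rmul_qcheck κ⟩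
  · rw [qinner_rmul_rmul_qcheck, show (x * star y).imK = 0 from hxy]
    ring
  · rw [qinner_rmul_rmul_qcheck, show (κ.1 * star κ.2).imK = 0 from hκ.2]
    ring
end
end

section
/- Every nonzero quaternion is a product of finitely many nonzero paravectors; equivalently, the multiplicative subgroup of the group ℍˣ of nonzero quaternions generated by the nonzero paravectors is all of ℍˣ. -/
open Quaternion

noncomputable section

/-! A quaternion with nonzero `k`-part is turned into a paravector by right multiplication with a
suitable nonzero paravector `p = a + b i`: the `k`-part of `q p` is `a q_k - b q_j`, a nontrivial
linear form in `(a, b)` which has a nonzero zero. Since paravectors are closed under inversion,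
`q = (q p) p⁻¹` is a product of two nonzero paravectors. -/

lemma IsParavector.inv {q : ℍ[ℝ]} (hq : IsParavector q) : IsParavector q⁻¹ := by
  rw [IsParavector, Quaternion.inv_def, Quaternion.imK_smul, Quaternion.imK_star, hq, neg_zero,
    smul_zero]

lemma exists_isParavector_mul_isParavector (q : ℍ[ℝ]) :
    ∃ p : ℍ[ℝ], IsParavector p ∧ p ≠ 0 ∧ IsParavector (q * p) := by
  by_cases hk : q.imK = 0
  · exact ⟨1, rfl, one_ne_zero, by rwa [mul_one]⟩
  · refine ⟨show ℍ[ℝ] from ⟨q.imJ, q.imK, 0, 0⟩, rfl,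
      fun h => hk (congrArg QuaternionAlgebra.imI h), ?_⟩
    rw [IsParavector, Quaternion.imK_mul]
    ring

lemma exists_isParavector_mul_eq (q : ℍ[ℝ]) (hq : q ≠ 0) :
    ∃ v w : ℍ[ℝ], IsParavector v ∧ v ≠ 0 ∧ IsParavector w ∧ w ≠ 0 ∧ v * w = q := by
  obtain ⟨p, hp, hp0, hqp⟩ := exists_isParavector_mul_isParavector q
  exact ⟨q * p, p⁻¹, hqp, mul_ne_zero hq hp0, hp.inv, inv_ne_zero hp0,
    by rw [mul_assoc, mul_inv_cancel₀ hp0, mul_one]⟩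

/-- Every nonzero quaternion is a product of finitely many nonzero paravectors;
equivalently, the subgroup of `ℍˣ` generated by the nonzero paravectors is all of `ℍˣ`
(the paravector Lipschitz group `$Γ₃` is `ℍˣ`). -/
theorem paravector_lipschitz_group :
    (∀ q : ℍ[ℝ], q ≠ 0 → ∃ L : List ℍ[ℝ], (∀ v ∈ L, IsParavector v ∧ v ≠ 0) ∧ L.prod = q) ∧
    Subgroup.closure {u : ℍ[ℝ]ˣ | IsParavector (u : ℍ[ℝ])} = ⊤ := by
  refine ⟨fun q hq => ?_, ?_⟩
  · obtain ⟨v, w, hv, hv0, hw, hw0, rfl⟩ := exists_isParavector_mul_eq q hq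
    refine ⟨[v, w], ?_, by simp⟩
    simp only [List.mem_cons, List.not_mem_nil, or_false]
    rintro x (rfl | rfl)
    exacts [⟨hv, hv0⟩, ⟨hw, hw0⟩]
  · refine (Subgroup.eq_top_iff' _).2 fun u => ?_
    obtain ⟨v, w, hv, hv0, hw, hw0, hvw⟩ := exists_isParavector_mul_eq u u.ne_zero
    have hu : u = Units.mk0 v hv0 * Units.mk0 w hw0 := Units.ext hvw.symm
    exact hu ▸ mul_mem (Subgroup.subset_closure hv) (Subgroup.subset_closure hw)
end
end
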